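/- arXiv:math/0409478 — 4 statements merged into one kernel-verified Lean document; each statement's English description precedes it below -/
import Mathlib

section
/- Theorem 3.7: Suppose in addition that G is locally finite (every vertex has only finitely many neighbors). Then the enlargement *G has a hypernode not in its principal galaxy: there exists a sequence x : ℕ → V such that for every vertex v ∈ V and every k ∈ ℕ, the set {n : d(x(n), v) ≤ k} does not belong to ℱ (equivalently, x is not limitedly distant from any constant sequence). -/
/-!
Balls in a connected locally finite graph are finite, so an infinite such graph has vertices
arbitrarily far from a fixed vertex `v₀`. Choosing `x n` at distance more than `n` from `v₀`, the
triangle inequality confines `{n | d(x n, v) ≤ k}` to an initial segment of `ℕ`, and a finite set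
never belongs to a free ultrafilter.
-/

namespace SimpleGraph

variable {V : Type*} {G : SimpleGraph V}

lemma Connected.eq_or_exists_adj_dist_le_of_dist_le_succ (hG : G.Connected) {u v : V} {k : ℕ}
    (h : G.dist u v ≤ k + 1) : u = v ∨ ∃ w, G.Adj u w ∧ G.dist w v ≤ k := by
  obtain ⟨p, hp⟩ := hG.exists_walk_length_eq_dist u v
  cases p with
  | nil => exact Or.inl rfl
  | @cons _ w _ hadj q =>
    refine Or.inr ⟨w, hadj, ?_⟩
    have := dist_le q
    rw [Walk.length_cons] at hp
    omega

lemma Connected.finite_setOf_dist_le (hG : G.Connected) (hlf : ∀ v, (G.neighborSet v).Finite)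
    (v : V) (k : ℕ) : {u | G.dist u v ≤ k}.Finite := by
  induction k with
  | zero =>
    exact (Set.finite_singleton v).subset fun u hu => hG.dist_eq_zero_iff.mp (Nat.le_zero.mp hu)
  | succ k ih =>
    refine (ih.biUnion fun w _ => (hlf w).insert w).subset fun u hu => ?_
    rcases hG.eq_or_exists_adj_dist_le_of_dist_le_succ hu with rfl | ⟨w, hadj, hw⟩
    · exact Set.mem_biUnion (x := u) (by simp) (Set.mem_insert u _)
    · exact Set.mem_biUnion (x := w) hw (Set.mem_insert_of_mem w hadj.symm)

lemma Connected.exists_lt_dist [Infinite V] (hG : G.Connected)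
    (hlf : ∀ v, (G.neighborSet v).Finite) (v : V) (n : ℕ) : ∃ u, n < G.dist u v := by
  obtain ⟨u, hu⟩ := (hG.finite_setOf_dist_le hlf v n).infinite_compl.nonempty
  exact ⟨u, not_le.mp hu⟩

end SimpleGraph

lemma Ultrafilter.notMem_of_finite_of_ne_pure {α : Type*} {f : Ultrafilter α}
    (hf : ∀ a, f ≠ pure a) {s : Set α} (hs : s.Finite) : s ∉ f := fun hmem =>
  let ⟨a, _, ha⟩ := Ultrafilter.eq_pure_of_finite_mem hs hmem
  hf a ha

/-- Theorem 3.7: if the connected infinite graph `G` is locally finite, then the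
enlargement `*G` has a hypernode not in its principal galaxy, i.e. a sequence
`x : ℕ → V` that is not limitedly distant from any constant sequence. -/
theorem exists_hypernode_outside_principal_galaxy {V : Type*} [Infinite V]
    (G : SimpleGraph V) (hG : G.Connected)
    (hlf : ∀ v : V, (G.neighborSet v).Finite)
    (ℱ : Ultrafilter ℕ) (hF : ∀ a : ℕ, ℱ ≠ pure a) :
    ∃ x : ℕ → V, ∀ v : V, ∀ k : ℕ, {n : ℕ | G.dist (x n) v ≤ k} ∉ ℱ := by
  obtain ⟨v₀⟩ := hG.nonempty
  choose x hx using hG.exists_lt_dist hlf v₀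
  refine ⟨x, fun v k => Ultrafilter.notMem_of_finite_of_ne_pure hF ?_⟩
  refine (Set.finite_Iio (k + G.dist v v₀)).subset fun n hn => ?_
  have htri : G.dist (x n) v₀ ≤ G.dist (x n) v + G.dist v v₀ := hG.dist_triangle
  have hfar := hx n
  simp only [Set.mem_ofPred_eq, Set.mem_Iio] at hn ⊢
  omega
end

section
/- Theorem 4.2: Suppose the enlargement *G has a hypernode not in its principal galaxy, i.e., there exists a sequence v : ℕ → V such that for every vertex w ∈ V and every k ∈ ℕ, {n : d(v(n), w) ≤ k} ∉ ℱ. Then for every vertex x₀ ∈ V there exists a two-way infinite family w : ℤ → (ℕ → V) of sequences such that: (a) for each i ∈ ℤ, the sequence w(i) is not limitedly distant from any constant sequence (so each w(i) lies in a galaxy different from the principal galaxy); (b) for all i < j in ℤ and every m ∈ ℕ, {n : d(w(i)(n), x₀) + m ≤ d(w(j)(n), x₀)} ∈ ℱ (the galaxy of w(i) is closer to the principal galaxy than is the galaxy of w(j)); and (c) for i ≠ j, w(i) and w(j) are not limitedly distant, so the family yields a two-way infinite sequence of distinct galaxies totally ordered according to their closeness to the principal galaxy. -/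
/-!
Let `v` be a hypernode outside the principal galaxy, so that `D n = d(x₀, v n)` is unlimited.
Put `w i n` on a geodesic from `x₀` to `v n`, at distance `⌊σ i * D n⌋` from `x₀`, where the
logistic sigmoid `σ` embeds `ℤ` strictly monotonically into `(0, 1)`. For `i < j` the distances
of `w i` and `w j` from `x₀` then differ by about `(σ j - σ i) * D n`, which is unlimited; this is
(b), and (a) and (c) follow from it by the triangle inequality.
-/

open Filter

namespace SimpleGraph

variable {V : Type*} {G : SimpleGraph V}

theorem Connected.exists_dist_eq_of_le (hG : G.Connected) {u v : V} {t : ℕ}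
    (ht : t ≤ G.dist u v) : ∃ x, G.dist u x = t := by
  obtain ⟨p, hp⟩ := hG.exists_walk_length_eq_dist u v
  refine ⟨p.getVert t, le_antisymm ?_ ?_⟩
  · exact (dist_le (p.take t)).trans ((p.take_length t).trans_le (min_le_left t p.length))
  · have hdrop : G.dist (p.getVert t) v ≤ G.dist u v - t := by
      simpa [Walk.drop_length, hp] using dist_le (p.drop t)
    have := hG.dist_triangle (u := u) (v := p.getVert t) (w := v)
    omega

theorem Connected.not_eventually_dist_le_of_dist_add_lt {α : Type*} {l : Filter α} [l.NeBot]
    (hG : G.Connected) {x₀ : V} {y z : α → V} {k : ℕ}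
    (h : ∀ᶠ n in l, G.dist x₀ (y n) + k < G.dist x₀ (z n)) :
    ¬ ∀ᶠ n in l, G.dist (y n) (z n) ≤ k := fun hk ↦ by
  obtain ⟨n, hgap, hle⟩ := (h.and hk).exists
  have := hG.dist_triangle (u := x₀) (v := y n) (w := z n)
  omega

end SimpleGraph

theorem eventually_floor_mul_add_le_floor_mul {a b : ℝ} (ha : 0 ≤ a) (hab : a < b) (m : ℕ) :
    ∀ᶠ D : ℕ in atTop, ⌊a * D⌋₊ + m ≤ ⌊b * D⌋₊ := by
  have hgap : Tendsto (fun D : ℕ ↦ (b - a) * D) atTop atTop :=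
    tendsto_natCast_atTop_atTop.const_mul_atTop (sub_pos.2 hab)
  filter_upwards [hgap.eventually_ge_atTop (m : ℝ)] with D hD
  refine Nat.le_floor ?_
  have := Nat.floor_le (mul_nonneg ha D.cast_nonneg)
  push_cast
  linarith

theorem two_way_infinite_sequence_of_galaxies_general {V : Type*}
    (G : SimpleGraph V) (hG : G.Connected)
    (ℱ : Ultrafilter ℕ)
    (hv : ∃ v : ℕ → V, ∀ w : V, ∀ k : ℕ, {n : ℕ | G.dist (v n) w ≤ k} ∉ ℱ) :
    ∀ x₀ : V, ∃ w : ℤ → (ℕ → V),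
      (∀ i : ℤ, ∀ c : V, ∀ k : ℕ, {n : ℕ | G.dist (w i n) c ≤ k} ∉ ℱ) ∧
      (∀ i j : ℤ, i < j → ∀ m : ℕ,
        {n : ℕ | G.dist (w i n) x₀ + m ≤ G.dist (w j n) x₀} ∈ ℱ) ∧
      (∀ i j : ℤ, i ≠ j →
        ¬ ∃ k : ℕ, {n : ℕ | G.dist (w i n) (w j n) ≤ k} ∈ ℱ) := by
  intro x₀
  obtain ⟨v, hv⟩ := hv
  have hD : Tendsto (fun n ↦ G.dist x₀ (v n)) ℱ atTop := by
    refine tendsto_atTop.2 fun K ↦ ?_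
    filter_upwards [ℱ.compl_mem_iff_notMem.2 (hv x₀ K)] with n hn
    simp only [Set.mem_compl_iff, Set.mem_ofPred_eq, not_le, SimpleGraph.dist_comm] at hn
    exact hn.le
  have exists_at_dist (i : ℤ) (n : ℕ) :
      ∃ x, G.dist x₀ x = ⌊Real.sigmoid i * G.dist x₀ (v n)⌋₊ :=
    hG.exists_dist_eq_of_le <| Nat.floor_le_of_le <|
      mul_le_of_le_one_left (Nat.cast_nonneg _) (Real.sigmoid_le_one i)
  choose w hw using exists_at_dist
  have hgap (i j : ℤ) (hij : i < j) (m : ℕ) :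
      ∀ᶠ n in (ℱ : Filter ℕ), G.dist x₀ (w i n) + m ≤ G.dist x₀ (w j n) := by
    simp only [hw]
    exact hD.eventually <| eventually_floor_mul_add_le_floor_mul (Real.sigmoid_nonneg i)
      (Real.sigmoid_strictMono (Int.cast_lt.2 hij)) m
  refine ⟨w, fun i c k ↦ ?_, fun i j hij m ↦ ?_, fun i j hij ⟨k, hk⟩ ↦ ?_⟩
  · have := hG.not_eventually_dist_le_of_dist_add_lt (y := fun _ ↦ c) (z := w i) (k := k)
      ((hgap (i - 1) i (by omega) _).mono fun n hn ↦ le_of_add_le_right hn)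
    simpa only [SimpleGraph.dist_comm, eventually_iff, Ultrafilter.mem_coe] using this
  · simpa only [SimpleGraph.dist_comm, eventually_iff, Ultrafilter.mem_coe] using hgap i j hij m
  · rcases hij.lt_or_gt with hij | hij
    · exact hG.not_eventually_dist_le_of_dist_add_lt (hgap i j hij (k + 1)) hk
    · refine hG.not_eventually_dist_le_of_dist_add_lt (hgap j i hij (k + 1)) ?_
      simpa only [SimpleGraph.dist_comm, eventually_iff, Ultrafilter.mem_coe] using hk

/-- Theorem 4.2: if the enlargement `*G` has a hypernode not in its principal
galaxy, then there is a two-way infinite sequence of distinct galaxies totally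
ordered according to their closeness to the principal galaxy. -/
theorem two_way_infinite_sequence_of_galaxies {V : Type*} [Infinite V]
    (G : SimpleGraph V) (hG : G.Connected)
    (ℱ : Ultrafilter ℕ) (hF : ∀ a : ℕ, ℱ ≠ pure a)
    (hv : ∃ v : ℕ → V, ∀ w : V, ∀ k : ℕ, {n : ℕ | G.dist (v n) w ≤ k} ∉ ℱ) :
    ∀ x₀ : V, ∃ w : ℤ → (ℕ → V),
      (∀ i : ℤ, ∀ c : V, ∀ k : ℕ, {n : ℕ | G.dist (w i n) c ≤ k} ∉ ℱ) ∧
      (∀ i j : ℤ, i < j → ∀ m : ℕ,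
        {n : ℕ | G.dist (w i n) x₀ + m ≤ G.dist (w j n) x₀} ∈ ℱ) ∧
      (∀ i j : ℤ, i ≠ j →
        ¬ ∃ k : ℕ, {n : ℕ | G.dist (w i n) (w j n) ≤ k} ∈ ℱ) :=
  two_way_infinite_sequence_of_galaxies_general G hG ℱ hv
end

section
/- Strictness of the closeness ordering (antisymmetry in Theorem 4.3): Let x, y, z : ℕ → V be sequences. If for every m ∈ ℕ the set {n : d(y(n), x(n)) + m ≤ d(z(n), x(n))} belongs to ℱ (the galaxy of y is closer to Γ₀ than is the galaxy of z), then y and z are not limitedly distant; in particular y and z lie in distinct galaxies, and the galaxy of z is not closer to Γ₀ than is the galaxy of y. -/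
open Filter

theorem Filter.not_eventually_le_add_of_forall_eventually_add_le {ι : Type*} {l : Filter ι}
    [l.NeBot] {f g : ι → ℕ} (h : ∀ m : ℕ, ∀ᶠ n in l, f n + m ≤ g n) (k : ℕ) :
    ¬ ∀ᶠ n in l, g n ≤ f n + k := fun hk =>
  ((h (k + 1)).and hk).exists.elim fun _ hn => by omega

theorem closer_strict_general {V : Type*}
    (G : SimpleGraph V) (hG : G.Connected)
    (ℱ : Ultrafilter ℕ)
    (x y z : ℕ → V)
    (hyz : ∀ m : ℕ,
      {n : ℕ | G.dist (y n) (x n) + m ≤ G.dist (z n) (x n)} ∈ ℱ) :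
    (¬ ∃ k : ℕ, {n : ℕ | G.dist (y n) (z n) ≤ k} ∈ ℱ) ∧
    ¬ (∀ m : ℕ,
      {n : ℕ | G.dist (z n) (x n) + m ≤ G.dist (y n) (x n)} ∈ ℱ) := by
  constructor
  · rintro ⟨k, hk⟩
    refine not_eventually_le_add_of_forall_eventually_add_le (l := (ℱ : Filter ℕ)) hyz k ?_
    filter_upwards [hk] with n hn
    calc G.dist (z n) (x n) ≤ G.dist (z n) (y n) + G.dist (y n) (x n) := hG.dist_triangle
      _ ≤ G.dist (y n) (x n) + k := by rw [G.dist_comm, add_comm]; gcongr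
  · intro hzy
    exact not_eventually_le_add_of_forall_eventually_add_le (l := (ℱ : Filter ℕ)) hyz 0 (hzy 0)

/-- Strictness / antisymmetry of the closeness ordering: if the galaxy of `y`
is closer to the principal galaxy than is the galaxy of `z` (witnessed by a
sequence `x`), then `y` and `z` are not limitedly distant (so they lie in
distinct galaxies), and the galaxy of `z` is not closer to the principal
galaxy than is the galaxy of `y`. -/
theorem closer_strict {V : Type*} [Infinite V]
    (G : SimpleGraph V) (hG : G.Connected)
    (ℱ : Ultrafilter ℕ) (hF : ∀ a : ℕ, ℱ ≠ pure a)
    (x y z : ℕ → V)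
    (hyz : ∀ m : ℕ,
      {n : ℕ | G.dist (y n) (x n) + m ≤ G.dist (z n) (x n)} ∈ ℱ) :
    (¬ ∃ k : ℕ, {n : ℕ | G.dist (y n) (z n) ≤ k} ∈ ℱ) ∧
    ¬ (∀ m : ℕ,
      {n : ℕ | G.dist (z n) (x n) + m ≤ G.dist (y n) (x n)} ∈ ℱ) :=
  closer_strict_general G hG ℱ x y z hyz
end

section
/- Dichotomy for the number of galaxies: If there exist two sequences y, z : ℕ → V that are not limitedly distant from each other (i.e., *G has more than one galaxy), then there exists a family w : ℤ → (ℕ → V) such that for all i ≠ j the sequences w(i) and w(j) are not limitedly distant. Hence the enlargement *G either has exactly one galaxy (its principal one) or has infinitely many galaxies. -/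
private lemma walk_length_drop {V : Type*} {G : SimpleGraph V} {u v : V}
    (p : G.Walk u v) (n : ℕ) : (p.drop n).length = p.length - n := by
  induction p generalizing n with
  | nil => simp [SimpleGraph.Walk.drop]
  | cons h q ih =>
    cases n with
    | zero => simp [SimpleGraph.Walk.drop]
    | succ n => simp [SimpleGraph.Walk.drop, ih]

private lemma dist_getVert_le {V : Type*} {G : SimpleGraph V} (hG : G.Connected) {u v : V}
    (p : G.Walk u v) (n : ℕ) : G.dist u (p.getVert n) ≤ n := by
  induction p generalizing n with
  | nil => simp [SimpleGraph.Walk.getVert, SimpleGraph.dist_self]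
  | @cons u u' v h q ih =>
    cases n with
    | zero => simp
    | succ n =>
      rw [SimpleGraph.Walk.getVert_cons_succ]
      calc G.dist u (q.getVert n) ≤ G.dist u u' + G.dist u' (q.getVert n) :=
            hG.dist_triangle
        _ ≤ 1 + n := by
            have h1 : G.dist u u' = 1 := SimpleGraph.dist_eq_one_iff_adj.mpr h
            exact Nat.add_le_add (le_of_eq h1) (ih n)
        _ = n + 1 := Nat.add_comm _ _

/-- Dichotomy for the number of galaxies: if `*G` has more than one galaxy
(i.e. there are two sequences that are not limitedly distant), then there is a
`ℤ`-indexed family of pairwise non-limitedly-distant sequences; hence `*G`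
either has exactly one galaxy (its principal one) or infinitely many. -/
theorem galaxy_dichotomy {V : Type*} [Infinite V]
    (G : SimpleGraph V) (hG : G.Connected)
    (ℱ : Ultrafilter ℕ) (hF : ∀ a : ℕ, ℱ ≠ pure a)
    (h : ∃ y z : ℕ → V,
      ¬ ∃ k : ℕ, {n : ℕ | G.dist (y n) (z n) ≤ k} ∈ ℱ) :
    ∃ w : ℤ → (ℕ → V), ∀ i j : ℤ, i ≠ j →
      ¬ ∃ k : ℕ, {n : ℕ | G.dist (w i n) (w j n) ≤ k} ∈ ℱ := by
  classical
  obtain ⟨y, z, hyz⟩ := h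
  set D : ℕ → ℕ := fun n => G.dist (y n) (z n) with hD
  -- the distances are unbounded along the ultrafilter
  have hub : ∀ k : ℕ, {n : ℕ | k < D n} ∈ ℱ := by
    intro k
    have hns : {n : ℕ | D n ≤ k} ∉ ℱ := fun hmem => hyz ⟨k, hmem⟩
    have hc : {n : ℕ | D n ≤ k}ᶜ ∈ ℱ := Ultrafilter.compl_mem_iff_notMem.mpr hns
    convert hc using 1
    ext n; simp [not_le]
  -- choose geodesics
  have hwalk : ∀ n, ∃ p : G.Walk (y n) (z n), p.length = D n := fun n =>
    hG.exists_walk_length_eq_dist (y n) (z n)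
  choose p hp using hwalk
  -- the encoding of ℤ into ℕ
  let e : ℤ → ℕ := fun i => Encodable.encode i
  have he : Function.Injective e := Encodable.encode_injective
  -- the positions along the geodesics
  let a : ℤ → ℕ → ℕ := fun i n => D n - D n / 2 ^ (e i + 1)
  let w : ℤ → ℕ → V := fun i n => (p n).getVert (a i n)
  refine ⟨w, ?_⟩
  have key : ∀ i j : ℤ, e i < e j →
      ¬ ∃ k : ℕ, {n : ℕ | G.dist (w i n) (w j n) ≤ k} ∈ ℱ := by
    rintro i j hij ⟨k, hk⟩
    -- pick n with both: distance ≤ k, and D n huge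
    have hbig := hub ((k + 1) * 2 ^ (e j + 1))
    obtain ⟨n, hn1, hn2⟩ := Filter.nonempty_of_mem (Filter.inter_mem hk hbig)
    simp only [Set.mem_setOf_eq] at hn1 hn2
    -- basic distance bounds
    have hyi : G.dist (y n) (w i n) ≤ a i n := dist_getVert_le hG (p n) (a i n)
    have hjz : G.dist (w j n) (z n) ≤ D n - a j n := by
      have := SimpleGraph.dist_le ((p n).drop (a j n))
      rwa [walk_length_drop, hp n] at this
    have htri : D n ≤ G.dist (y n) (w i n) + (G.dist (w i n) (w j n)
        + G.dist (w j n) (z n)) :=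
      le_trans hG.dist_triangle (Nat.add_le_add_left hG.dist_triangle _)
    have hai : a i n ≤ D n := Nat.sub_le _ _
    have haj : a j n ≤ D n := Nat.sub_le _ _
    have hstep : a j n - a i n ≤ G.dist (w i n) (w j n) := by omega
    -- a j n - a i n = D n / 2^(e i + 1) - D n / 2^(e j + 1)
    have hdivi : D n / 2 ^ (e i + 1) ≤ D n := Nat.div_le_self _ _
    have hdivj : D n / 2 ^ (e j + 1) ≤ D n := Nat.div_le_self _ _
    have hmono : D n / 2 ^ (e j) ≤ D n / 2 ^ (e i + 1) :=
      Nat.div_le_div_left (Nat.pow_le_pow_right (by norm_num) hij) (Nat.pow_pos (by norm_num))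
    have hhalf : 2 * (D n / 2 ^ (e j + 1)) ≤ D n / 2 ^ (e j) := by
      have : D n / 2 ^ (e j + 1) = D n / 2 ^ (e j) / 2 := by
        rw [Nat.div_div_eq_div_mul, pow_succ]
      rw [this, Nat.mul_comm]
      exact Nat.div_mul_le_self _ _
    have hgap : D n / 2 ^ (e j + 1) ≤ a j n - a i n := by
      simp only [a]
      omega
    -- but D n is huge, so D n / 2^(e j + 1) > k
    have hDn : k + 1 ≤ D n / 2 ^ (e j + 1) :=
      (Nat.le_div_iff_mul_le (Nat.pow_pos (by norm_num))).mpr (le_of_lt hn2)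
    omega
  intro i j hij hmem
  rcases Nat.lt_or_ge (e i) (e j) with hlt | hge
  · exact key i j hlt hmem
  · have hlt : e j < e i := lt_of_le_of_ne hge (fun hh => hij (he hh.symm))
    refine key j i hlt ?_
    obtain ⟨k, hk⟩ := hmem
    refine ⟨k, ?_⟩
    convert hk using 2
    ext n
    simp [SimpleGraph.dist_comm]
end
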